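/- Let G be an abelian group, let A ⊆ G be a finite nonempty set, and let d ≥ 1 be a real number such that E_4^+(A, B) ≤ d · |A| · |B|^3 for every nonempty finite set B ⊆ G. Then |A|^4 ≤ d · E^+(A − A). -/

import Mathlib

open Finset
open scoped Pointwise

/-- The representation function `r_{A−B}(x) = #{(a,b) ∈ A × B : x = a − b}`. -/
def rSub {G : Type*} [AddCommGroup G] [DecidableEq G] (A B : Finset G) (x : G) : ℕ :=
  ((A ×ˢ B).filter fun ab => ab.1 - ab.2 = x).card

/-- The additive energy `E^+(A,B) = Σ_x r_{A−B}(x)^2`; the summand is supported on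
the difference set `A − B`.  `E^+(D) = E2 D D`. -/
def E2 {G : Type*} [AddCommGroup G] [DecidableEq G] (A B : Finset G) : ℕ :=
  ∑ x ∈ A - B, (rSub A B x) ^ 2

/-- The fourth order additive energy `E_4^+(A,B) = Σ_x r_{A−B}(x)^4`. -/
def E4 {G : Type*} [AddCommGroup G] [DecidableEq G] (A B : Finset G) : ℕ :=
  ∑ x ∈ A - B, (rSub A B x) ^ 4

/-!
Write `D = A - A` and `A_p = A ∩ (A - p)`, so that `|A_p| = r_{A−A}(p)` and
`|A|^4 = Σ_{p,q ∈ D} |A_p| |A_q|`. By Cauchy–Schwarz, `(|A_p| |A_q|)^2 ≤ |A_p − A_q| E^+(A_p, A_q)`,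
and `v ↦ (v + p − q, v)` embeds `A_p − A_q` into the representations of `p − q` in `D − D`, so
`|A_p − A_q| ≤ r_{D−D}(p − q)`. A second Cauchy–Schwarz over the pairs `(p, q)` gives
`|A|^8 ≤ E^+(D) · Σ_{p,q} E^+(A_p, A_q) = E^+(D) E_4^+(A, A)`, the last identity because
`r_{A_p−A_p}(u) = r_{A_u−A_u}(p)` sums over `p` to `r_{A−A}(u)^2`. Finally `E_4^+(A, A) ≤ d |A|^4`.
-/

section

variable {G : Type*} [AddCommGroup G] [DecidableEq G]

lemma rSub_eq_zero_of_notMem {A B : Finset G} {x : G} (h : x ∉ A - B) : rSub A B x = 0 := by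
  rw [rSub, card_eq_zero, filter_eq_empty_iff]
  rintro ⟨a, b⟩ hab rfl
  exact h (sub_mem_sub (mem_product.1 hab).1 (mem_product.1 hab).2)

lemma rSub_eq_sum_sum_ite (A B : Finset G) (x : G) :
    rSub A B x = ∑ a ∈ A, ∑ b ∈ B, if a - b = x then 1 else 0 := by
  rw [rSub, card_filter, sum_product]

lemma sum_product_sub_eq_sum_rSub_mul (A B : Finset G) (f : G → ℕ) :
    ∑ ab ∈ A ×ˢ B, f (ab.1 - ab.2) = ∑ x ∈ A - B, rSub A B x * f x := by
  rw [← sum_fiberwise_of_maps_to (g := fun ab : G × G => ab.1 - ab.2) (t := A - B)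
    fun ab hab => sub_mem_sub (mem_product.1 hab).1 (mem_product.1 hab).2]
  refine sum_congr rfl fun x _ => ?_
  rw [sum_congr rfl fun ab hab => by rw [(mem_filter.1 hab).2], sum_const, smul_eq_mul, rSub]

lemma sum_rSub (A B : Finset G) : ∑ x ∈ A - B, rSub A B x = #A * #B := by
  simpa using (sum_product_sub_eq_sum_rSub_mul A B fun _ => 1).symm

lemma E2_eq_sum_product (A B : Finset G) :
    E2 A B = ∑ ab ∈ A ×ˢ B, rSub A B (ab.1 - ab.2) := by
  simp only [sum_product_sub_eq_sum_rSub_mul, E2, sq]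

/-- Both sides count the quadruples `(a, a', b, b') ∈ A × A × B × B` with `a - b = a' - b'`. -/
lemma E2_eq_sum_rSub_mul_rSub (A B : Finset G) :
    E2 A B = ∑ u ∈ A - A, rSub A A u * rSub B B u := by
  rw [E2_eq_sum_product, ← sum_product_sub_eq_sum_rSub_mul A A (rSub B B)]
  simp only [rSub_eq_sum_sum_ite, sum_product]
  refine sum_congr rfl fun a _ => ?_
  rw [sum_comm]
  refine sum_congr rfl fun a' _ => sum_congr rfl fun b _ => sum_congr rfl fun b' _ => ?_
  have : a' - b' - (a - b) = b - b' - (a - a') := by abel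
  exact if_congr (by rw [← sub_eq_zero, this, sub_eq_zero]) rfl rfl

def shiftInter (A : Finset G) (p : G) : Finset G := A.filter (· + p ∈ A)

lemma shiftInter_subset (A : Finset G) (p : G) : shiftInter A p ⊆ A := filter_subset _ _

lemma card_shiftInter (A : Finset G) (p : G) : #(shiftInter A p) = rSub A A p := by
  rw [rSub_eq_sum_sum_ite, sum_comm, shiftInter, card_filter]
  refine sum_congr rfl fun b _ => ?_
  simp only [sub_eq_iff_eq_add', sum_ite_eq']

lemma shiftInter_comm (A : Finset G) (p q : G) :
    shiftInter (shiftInter A p) q = shiftInter (shiftInter A q) p := by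
  ext b
  simp only [shiftInter, mem_filter, add_right_comm b p q]
  tauto

lemma card_shiftInter_sub_le (A : Finset G) (p q : G) :
    #(shiftInter A p - shiftInter A q) ≤ rSub (A - A) (A - A) (p - q) := by
  refine card_le_card_of_injOn (fun v => (v + (p - q), v)) ?_ fun v _ w _ h => congrArg Prod.snd h
  intro v hv
  obtain ⟨a, ha, b, hb, rfl⟩ := mem_sub.1 (mem_coe.1 hv)
  simp only [shiftInter, mem_filter] at ha hb
  have : a - b + (p - q) = a + p - (b + q) := by abel
  simp only [mem_coe, mem_filter, mem_product, this]
  exact ⟨⟨sub_mem_sub ha.2 hb.2, sub_mem_sub ha.1 hb.1⟩, by abel⟩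

lemma sum_rSub_shiftInter (A : Finset G) (u : G) :
    ∑ p ∈ A - A, rSub (shiftInter A p) (shiftInter A p) u = rSub A A u ^ 2 := by
  have hswap (p : G) :
      rSub (shiftInter A p) (shiftInter A p) u = rSub (shiftInter A u) (shiftInter A u) p := by
    rw [← card_shiftInter, ← card_shiftInter, shiftInter_comm]
  rw [sum_congr rfl fun p _ => hswap p, ← sum_subset
    (sub_subset_sub (shiftInter_subset A u) (shiftInter_subset A u))
    fun p _ hp => rSub_eq_zero_of_notMem hp, sum_rSub, card_shiftInter, sq]

lemma sum_E2_shiftInter (A : Finset G) :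
    ∑ pq ∈ (A - A) ×ˢ (A - A), E2 (shiftInter A pq.1) (shiftInter A pq.2) = E4 A A := by
  have hcorr (p q : G) : E2 (shiftInter A p) (shiftInter A q) = ∑ u ∈ A - A,
      rSub (shiftInter A p) (shiftInter A p) u * rSub (shiftInter A q) (shiftInter A q) u := by
    rw [E2_eq_sum_rSub_mul_rSub]
    exact sum_subset (sub_subset_sub (shiftInter_subset A p) (shiftInter_subset A p))
      fun u _ hu => by rw [rSub_eq_zero_of_notMem hu, zero_mul]
  calc ∑ pq ∈ (A - A) ×ˢ (A - A), E2 (shiftInter A pq.1) (shiftInter A pq.2)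
      = ∑ u ∈ A - A, (∑ p ∈ A - A, rSub (shiftInter A p) (shiftInter A p) u) *
          ∑ q ∈ A - A, rSub (shiftInter A q) (shiftInter A q) u := by
        simp only [sum_product, hcorr, sum_mul_sum]
        exact (sum_congr rfl fun p _ => sum_comm).trans sum_comm
    _ = E4 A A := sum_congr rfl fun u _ => by rw [sum_rSub_shiftInter]; ring

lemma sq_rSub_mul_rSub_le (A : Finset G) (p q : G) :
    (rSub A A p * rSub A A q) ^ 2 ≤
      rSub (A - A) (A - A) (p - q) * E2 (shiftInter A p) (shiftInter A q) :=
  calc (rSub A A p * rSub A A q) ^ 2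
      = (∑ v ∈ shiftInter A p - shiftInter A q, rSub (shiftInter A p) (shiftInter A q) v) ^ 2 := by
        rw [sum_rSub, card_shiftInter, card_shiftInter]
    _ ≤ #(shiftInter A p - shiftInter A q) * E2 (shiftInter A p) (shiftInter A q) :=
        sq_sum_le_card_mul_sum_sq
    _ ≤ _ := Nat.mul_le_mul_right _ (card_shiftInter_sub_le A p q)

theorem card_pow_eight_le_E2_mul_E4 (A : Finset G) :
    #A ^ 8 ≤ E2 (A - A) (A - A) * E4 A A :=
  calc #A ^ 8 = (∑ pq ∈ (A - A) ×ˢ (A - A), rSub A A pq.1 * rSub A A pq.2) ^ 2 := by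
        rw [sum_product, ← sum_mul_sum, sum_rSub]; ring
    _ ≤ (∑ pq ∈ (A - A) ×ˢ (A - A), rSub (A - A) (A - A) (pq.1 - pq.2)) *
          ∑ pq ∈ (A - A) ×ˢ (A - A), E2 (shiftInter A pq.1) (shiftInter A pq.2) :=
        sum_sq_le_sum_mul_sum_of_sq_le_mul _ (fun _ _ => Nat.zero_le _) (fun _ _ => Nat.zero_le _)
          fun pq _ => sq_rSub_mul_rSub_le A pq.1 pq.2
    _ = E2 (A - A) (A - A) * E4 A A := by rw [← E2_eq_sum_product, sum_E2_shiftInter]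

end

theorem card_pow_four_le_energy_of_diffset_general
    {G : Type*} [AddCommGroup G] [DecidableEq G] (A : Finset G) (d : ℝ)
    (hA : A.Nonempty)
    (hd4 : ∀ B : Finset G, B.Nonempty →
      (E4 A B : ℝ) ≤ d * (A.card : ℝ) * (B.card : ℝ) ^ (3 : ℕ)) :
    (A.card : ℝ) ^ (4 : ℕ) ≤ d * (E2 (A - A) (A - A) : ℝ) := by
  have hpos : (0 : ℝ) < #A ^ 4 := by have := hA.card_pos; positivity
  have h8 : (#A : ℝ) ^ 4 * #A ^ 4 ≤ E2 (A - A) (A - A) * E4 A A := by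
    rw [← pow_add]; exact_mod_cast card_pow_eight_le_E2_mul_E4 A
  refine le_of_mul_le_mul_right ?_ hpos
  calc (#A : ℝ) ^ 4 * #A ^ 4 ≤ E2 (A - A) (A - A) * E4 A A := h8
    _ ≤ E2 (A - A) (A - A) * (d * #A * #A ^ 3) :=
        mul_le_mul_of_nonneg_left (hd4 A hA) (Nat.cast_nonneg _)
    _ = d * E2 (A - A) (A - A) * #A ^ 4 := by ring

/-- If `E_4^+(A,B) ≤ d |A| |B|^3` for all nonempty `B` (i.e. `d_4^+(A) ≤ d`), then
`|A|^4 ≤ d · E^+(A − A)`. -/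
theorem card_pow_four_le_energy_of_diffset
    {G : Type*} [AddCommGroup G] [DecidableEq G] (A : Finset G) (d : ℝ)
    (hA : A.Nonempty) (hd : 1 ≤ d)
    (hd4 : ∀ B : Finset G, B.Nonempty →
      (E4 A B : ℝ) ≤ d * (A.card : ℝ) * (B.card : ℝ) ^ (3 : ℕ)) :
    (A.card : ℝ) ^ (4 : ℕ) ≤ d * (E2 (A - A) (A - A) : ℝ) :=
  card_pow_four_le_energy_of_diffset_general A d hA hd4
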